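/- Consider the collection of labeled ABox-CQ examples E = (E⁺, E⁻) with positive examples ({A₁(a)}, ∃x (r(x,a) ∧ A₂(x))) and ({A₂(a)}, ∃x (r(x,a) ∧ A₁(x))) and negative examples ({A₁(a)}, B(a)) and ({A₂(a)}, B(a)). Then: (1) the ALCI-ontology {A₁ ⊑ ∃r⁻.A₂, A₂ ⊑ ∃r⁻.A₁} fits E, so E admits a fitting ALCI-ontology; (2) no ALC-ontology fits E. In particular, for CQ examples, fitting ALC-ontology existence and fitting ALCI-ontology existence differ. -/

import Mathlib

/-!
Formalization background for "Fitting Ontologies to ABox-Query Examples":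
description logics ALC / ALCI / ALCQ, ABoxes, interpretations (with standard
names assumption), ontologies, queries (AQ / CQ / full CQ / UCQ), fitting
problems, homomorphisms, forest models, unravelings, etc.
-/

namespace DLFit

/-- Roles: role names and inverse roles (both indexed by natural numbers). -/
inductive DLRole : Type
  | name (r : ℕ)
  | inv (r : ℕ)
deriving DecidableEq

/-- Concepts of ALCIQ, a common superlanguage of ALC, ALCI and ALCQ. -/
inductive Concept : Type
  | top
  | atom (A : ℕ)
  | neg (C : Concept)
  | inter (C D : Concept)
  | ex (r : DLRole) (C : Concept)
  | atLeast (n : ℕ) (r : DLRole) (C : Concept)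
  | atMost (n : ℕ) (r : DLRole) (C : Concept)
deriving DecidableEq

/-- A concept uses no inverse roles. -/
def Concept.invFree : Concept → Prop
  | .top => True
  | .atom _ => True
  | .neg C => C.invFree
  | .inter C D => C.invFree ∧ D.invFree
  | .ex r C => (∃ m, r = DLRole.name m) ∧ C.invFree
  | .atLeast _ r C => (∃ m, r = DLRole.name m) ∧ C.invFree
  | .atMost _ r C => (∃ m, r = DLRole.name m) ∧ C.invFree

/-- A concept uses no qualified number restrictions. -/
def Concept.countFree : Concept → Prop
  | .top => True
  | .atom _ => True
  | .neg C => C.countFree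
  | .inter C D => C.countFree ∧ D.countFree
  | .ex _ C => C.countFree
  | .atLeast _ _ _ => False
  | .atMost _ _ _ => False

/-- An ontology is a finite set of concept inclusions `C ⊑ D`. -/
abbrev Ontology := Finset (Concept × Concept)

/-- The two ontology languages considered: ALC and ALCI. -/
inductive DL : Type
  | alc
  | alci
deriving DecidableEq

/-- Membership of an ontology in ALC resp. ALCI. -/
def OntologyInLang : DL → Ontology → Prop
  | .alc, O => ∀ ci ∈ O, ci.1.invFree ∧ ci.1.countFree ∧ ci.2.invFree ∧ ci.2.countFree
  | .alci, O => ∀ ci ∈ O, ci.1.countFree ∧ ci.2.countFree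

/-- An ALCQ-ontology: no inverse roles (number restrictions allowed). -/
def OntologyIsALCQ (O : Ontology) : Prop := ∀ ci ∈ O, ci.1.invFree ∧ ci.2.invFree

/-- ABox assertions `A(a)` and `r(a,b)`. -/
inductive Assertion : Type
  | conc (A : ℕ) (a : ℕ)
  | role (r : ℕ) (a b : ℕ)
deriving DecidableEq

/-- An ABox is a finite set of assertions. -/
abbrev ABox := Finset Assertion

def AssertionInds : Assertion → Finset ℕ
  | .conc _ a => {a}
  | .role _ a b => {a, b}

/-- The individual names occurring in an ABox. -/
def ABoxInds (A : ABox) : Finset ℕ := A.biUnion AssertionInds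

def AssertionCNs : Assertion → Finset ℕ
  | .conc P _ => {P}
  | .role _ _ _ => ∅

/-- The concept names occurring in an ABox. -/
def ABoxCNs (A : ABox) : Finset ℕ := A.biUnion AssertionCNs

/-- An interpretation, with the standard names assumption: every individual
name denotes itself, i.e. the (injective) map `indI` embeds the individual
names into the domain. -/
structure Interp : Type 1 where
  Dom : Type
  indI : ℕ → Dom
  indI_inj : Function.Injective indI
  concI : ℕ → Set Dom
  roleI : ℕ → Set (Dom × Dom)

/-- Semantics of (possibly inverse) roles. -/
def Interp.rSem (I : Interp) : DLRole → Set (I.Dom × I.Dom)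
  | .name r => I.roleI r
  | .inv r => {p | (p.2, p.1) ∈ I.roleI r}

/-- Semantics of concepts. -/
def Interp.cSem (I : Interp) : Concept → Set I.Dom
  | .top => Set.univ
  | .atom A => I.concI A
  | .neg C => (I.cSem C)ᶜ
  | .inter C D => I.cSem C ∩ I.cSem D
  | .ex r C => {d | ∃ e, (d, e) ∈ I.rSem r ∧ e ∈ I.cSem C}
  | .atLeast n r C => {d | (n : ℕ∞) ≤ {e | (d, e) ∈ I.rSem r ∧ e ∈ I.cSem C}.encard}
  | .atMost n r C => {d | {e | (d, e) ∈ I.rSem r ∧ e ∈ I.cSem C}.encard ≤ (n : ℕ∞)}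

/-- `I` is a model of the ontology `O`. -/
def Interp.IsModelOf (I : Interp) (O : Ontology) : Prop :=
  ∀ ci ∈ O, I.cSem ci.1 ⊆ I.cSem ci.2

def Interp.SatAssertion (I : Interp) : Assertion → Prop
  | .conc P a => I.indI a ∈ I.concI P
  | .role r a b => (I.indI a, I.indI b) ∈ I.roleI r

/-- `I` is a model of the ABox `A` (individual names interpreted as themselves). -/
def Interp.SatABox (I : Interp) (A : ABox) : Prop := ∀ α ∈ A, I.SatAssertion α

/-- An ABox is consistent with an ontology if they have a common model. -/
def ConsistentWith (A : ABox) (O : Ontology) : Prop :=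
  ∃ I : Interp, I.IsModelOf O ∧ I.SatABox A

/-- Homomorphism between ABoxes (need not fix individual names). -/
def ABoxHom (h : ℕ → ℕ) (A B : ABox) : Prop :=
  (∀ P a, Assertion.conc P a ∈ A → Assertion.conc P (h a) ∈ B) ∧
  (∀ r a b, Assertion.role r a b ∈ A → Assertion.role r (h a) (h b) ∈ B)

/-- Homomorphism from an ABox into an interpretation. -/
def ABoxIHom (I : Interp) (h : ℕ → I.Dom) (A : ABox) : Prop :=
  (∀ P a, Assertion.conc P a ∈ A → h a ∈ I.concI P) ∧
  (∀ r a b, Assertion.role r a b ∈ A → (h a, h b) ∈ I.roleI r)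

/-- Local injectivity of a homomorphism on an ABox. -/
def LocInj {D : Type} (h : ℕ → D) (A : ABox) : Prop :=
  ∀ r a b c, Assertion.role r a b ∈ A → Assertion.role r a c ∈ A → h b = h c → b = c

/-- The ABoxes in a collection of examples have pairwise disjoint individual names. -/
def PairwiseDisjInds (S : Finset ABox) : Prop :=
  ∀ A ∈ S, ∀ B ∈ S, A ≠ B → Disjoint (ABoxInds A) (ABoxInds B)

/-! ## Queries -/

/-- Terms of a query: variables and individual names. -/
inductive Term : Type
  | var (x : ℕ)
  | ind (a : ℕ)
deriving DecidableEq

/-- Atoms of a query. -/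
inductive Atom : Type
  | catom (A : ℕ) (t : Term)
  | ratom (r : ℕ) (t t' : Term)
deriving DecidableEq

/-- A (Boolean) conjunctive query, viewed as its finite set of atoms;
all variables are (implicitly) existentially quantified. -/
abbrev CQ := Finset Atom

/-- A union of conjunctive queries. -/
abbrev UCQ := Finset CQ

def TermInds : Term → Finset ℕ
  | .var _ => ∅
  | .ind a => {a}

def AtomInds : Atom → Finset ℕ
  | .catom _ t => TermInds t
  | .ratom _ t t' => TermInds t ∪ TermInds t'

/-- Individual names occurring in a CQ. -/
def CQInds (q : CQ) : Finset ℕ := q.biUnion AtomInds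

def UCQInds (q : UCQ) : Finset ℕ := q.biUnion CQInds

def AtomCNs : Atom → Finset ℕ
  | .catom P _ => {P}
  | .ratom _ _ _ => ∅

/-- Concept names occurring in a CQ. -/
def CQCNs (q : CQ) : Finset ℕ := q.biUnion AtomCNs

def UCQCNs (q : UCQ) : Finset ℕ := q.biUnion CQCNs

def AtomGround : Atom → Prop
  | .catom _ t => ∃ a, t = Term.ind a
  | .ratom _ t t' => (∃ a, t = Term.ind a) ∧ (∃ a, t' = Term.ind a)

/-- A full CQ: no (existentially quantified) variables. -/
def CQIsFull (q : CQ) : Prop := ∀ α ∈ q, AtomGround α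

def TermEval (I : Interp) (v : ℕ → I.Dom) : Term → I.Dom
  | .var x => v x
  | .ind a => I.indI a

def Interp.SatAtom (I : Interp) (v : ℕ → I.Dom) : Atom → Prop
  | .catom P t => TermEval I v t ∈ I.concI P
  | .ratom r t t' => (TermEval I v t, TermEval I v t') ∈ I.roleI r

/-- `I ⊨ q` for a CQ `q`: there is a (strong) homomorphism of the atoms of `q`
into `I` that is the identity on individual names. -/
def Interp.SatCQ (I : Interp) (q : CQ) : Prop :=
  ∃ v : ℕ → I.Dom, ∀ α ∈ q, I.SatAtom v α

/-- `I ⊨ q` for a UCQ `q`: some disjunct is satisfied. -/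
def Interp.SatUCQ (I : Interp) (q : UCQ) : Prop := ∃ p ∈ q, I.SatCQ p

/-- `A ∪ O ⊨ Q(a)` for an atomic query. -/
def EntailsAQ (A : ABox) (O : Ontology) (Q a : ℕ) : Prop :=
  ∀ I : Interp, I.IsModelOf O → I.SatABox A → I.indI a ∈ I.concI Q

/-- `A ∪ O ⊨ q` for a CQ. -/
def EntailsCQ (A : ABox) (O : Ontology) (q : CQ) : Prop :=
  ∀ I : Interp, I.IsModelOf O → I.SatABox A → I.SatCQ q

/-- `A ∪ O ⊨ q` for a UCQ. -/
def EntailsUCQ (A : ABox) (O : Ontology) (q : UCQ) : Prop :=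
  ∀ I : Interp, I.IsModelOf O → I.SatABox A → I.SatUCQ q

/-! ## Examples and fitting -/

/-- An ABox-AQ example `(𝒜, Q(a))`. -/
abbrev AQEx := ABox × ℕ × ℕ

/-- An ABox-CQ (in particular, ABox-FullCQ) example `(𝒜, q)`. -/
abbrev CQEx := ABox × CQ

/-- An ABox-UCQ example `(𝒜, q)`. -/
abbrev UEx := ABox × UCQ

/-- `O` fits a collection of labeled ABox(-consistency) examples. -/
def FitsCons (O : Ontology) (Ep En : Finset ABox) : Prop :=
  (∀ A ∈ Ep, ConsistentWith A O) ∧ (∀ A ∈ En, ¬ ConsistentWith A O)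

/-- `O` fits a collection of labeled ABox-AQ examples. -/
def FitsAQ (O : Ontology) (Ep En : Finset AQEx) : Prop :=
  (∀ e ∈ Ep, EntailsAQ e.1 O e.2.1 e.2.2) ∧ (∀ e ∈ En, ¬ EntailsAQ e.1 O e.2.1 e.2.2)

/-- `O` fits a collection of labeled ABox-CQ examples. -/
def FitsCQ (O : Ontology) (Ep En : Finset CQEx) : Prop :=
  (∀ e ∈ Ep, EntailsCQ e.1 O e.2) ∧ (∀ e ∈ En, ¬ EntailsCQ e.1 O e.2)

/-- `O` fits a collection of labeled ABox-UCQ examples. -/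
def FitsUCQ (O : Ontology) (Ep En : Finset UEx) : Prop :=
  (∀ e ∈ Ep, EntailsUCQ e.1 O e.2) ∧ (∀ e ∈ En, ¬ EntailsUCQ e.1 O e.2)

/-- An example `(A, q)` is inconsistent if every ALCI-ontology `O` with
`A ∪ O ⊨ q` is inconsistent with `A`. -/
def InconsistentEx (A : ABox) (q : CQ) : Prop :=
  ∀ O : Ontology, OntologyInLang DL.alci O → EntailsCQ A O q → ¬ ConsistentWith A O

/-! ## Completions and refutation candidates -/

/-- The disjoint union `A⁻` of the ABoxes of the negative AQ examples
(the ABoxes of a collection have pairwise disjoint individual names, so the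
disjoint union is the plain union). -/
def NegUnionAQ (En : Finset AQEx) : ABox := En.sup Prod.fst

/-- The disjoint union `A⁻` of the ABoxes of the negative CQ examples. -/
def NegUnionCQ (En : Finset CQEx) : ABox := En.sup Prod.fst

/-- A completion for a collection of ABox-AQ examples: extends `A⁻` by concept
assertions `Q(b)` with `b ∈ ind(A⁻)` and `Q` occurring as an AQ in `E⁺`. -/
def IsCompletionAQ (Ep En : Finset AQEx) (C : ABox) : Prop :=
  NegUnionAQ En ⊆ C ∧
  ∀ α ∈ C, α ∈ NegUnionAQ En ∨
    ∃ Q b, α = Assertion.conc Q b ∧ b ∈ ABoxInds (NegUnionAQ En) ∧ ∃ e ∈ Ep, e.2.1 = Q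

/-- Refutation candidates for a collection of ABox-AQ examples. -/
inductive RefCandAQ (Ep : Finset AQEx) (base : ABox) : ABox → Prop
  | base : RefCandAQ Ep base base
  | step {C : ABox} {A : ABox} {Q a : ℕ} {h : ℕ → ℕ} :
      RefCandAQ Ep base C → (A, Q, a) ∈ Ep → ABoxHom h A C →
      RefCandAQ Ep base (insert (Assertion.conc Q (h a)) C)

/-- A completion for a collection of ABox-FullCQ examples: extends `A⁻` by
concept assertions `Q(b)` with `b ∈ ind(A⁻)` and `Q` occurring in a query of a
positive example. -/
def IsCompletionCQ (Ep En : Finset CQEx) (C : ABox) : Prop :=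
  NegUnionCQ En ⊆ C ∧
  ∀ α ∈ C, α ∈ NegUnionCQ En ∨
    ∃ Q b, α = Assertion.conc Q b ∧ b ∈ ABoxInds (NegUnionCQ En) ∧ ∃ e ∈ Ep, Q ∈ CQCNs e.2

/-- Refutation candidates for a collection of ABox-FullCQ examples. -/
inductive RefCandCQ (Ep : Finset CQEx) (base : ABox) : ABox → Prop
  | base : RefCandCQ Ep base base
  | step {C : ABox} {A : ABox} {q : CQ} {Q a : ℕ} {h : ℕ → ℕ} :
      RefCandCQ Ep base C → (A, q) ∈ Ep → ¬ InconsistentEx A q → ABoxHom h A C →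
      Atom.catom Q (Term.ind a) ∈ q →
      RefCandCQ Ep base (insert (Assertion.conc Q (h a)) C)

/-! ## Forest models, unravelings and `I_{A,h,L}` -/

/-- The edge relation of the graph of a forest model: some role edge, excluding
pairs of ABox individuals. -/
def ForestEdge (I : Interp) (A : ABox) (d e : I.Dom) : Prop :=
  (∃ r, (d, e) ∈ I.roleI r) ∧
  ¬ ∃ a ∈ ABoxInds A, ∃ b ∈ ABoxInds A, d = I.indI a ∧ e = I.indI b

/-- The undirected version of the graph of a forest model. -/
def ForestGraph (I : Interp) (A : ABox) : SimpleGraph I.Dom where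
  Adj d e := d ≠ e ∧ (ForestEdge I A d e ∨ ForestEdge I A e d)
  symm := ⟨fun _ _ h => ⟨h.1.symm, h.2.symm⟩⟩
  loopless := ⟨fun _ h => h.1 rfl⟩

/-- `I` is an `L`-forest model of the ABox `A`:
it is a model of `A`; role edges among ABox individuals are exactly those
asserted in `A`; and the remaining role edges form a forest (for ALC a
directed forest whose edges point away from the roots, for ALCI an
undirected forest). -/
def IsForestModel (L : DL) (I : Interp) (A : ABox) : Prop :=
  I.SatABox A ∧
  (∀ r a b, a ∈ ABoxInds A → b ∈ ABoxInds A →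
    ((I.indI a, I.indI b) ∈ I.roleI r ↔ Assertion.role r a b ∈ A)) ∧
  (match L with
    | DL.alc =>
        (∀ e : I.Dom, {d : I.Dom | ForestEdge I A d e}.Subsingleton) ∧
        WellFounded (fun d e : I.Dom => ForestEdge I A d e)
    | DL.alci =>
        (∀ d : I.Dom, ¬ ForestEdge I A d d) ∧ (ForestGraph I A).IsAcyclic)

/-- `e` is a neighbor of `d` in `I`. -/
def Neighbor (I : Interp) (d e : I.Dom) : Prop :=
  ∃ r, (d, e) ∈ I.roleI r ∨ (e, d) ∈ I.roleI r

/-- The degree of `I` (maximal number of neighbors) is at most `n`. -/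
def DegreeLE (I : Interp) (n : ℕ) : Prop :=
  ∀ d : I.Dom, ∃ s : Finset I.Dom, s.card ≤ n ∧ ∀ e : I.Dom, Neighbor I d e → e ∈ s

/-- The disjoint union of a family of interpretations (`pick` chooses, for
every individual name, the component interpreting it). -/
def Interp.disjUnion {ι : Type} (J : ι → Interp) (pick : ℕ → ι) : Interp where
  Dom := Σ i : ι, (J i).Dom
  indI := fun n => ⟨pick n, (J (pick n)).indI n⟩
  indI_inj := by
    intro m n hmn
    obtain ⟨h1, h2⟩ := Sigma.ext_iff.mp hmn
    dsimp only at h1 h2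
    rw [h1] at h2
    exact (J (pick n)).indI_inj (eq_of_heq h2)
  concI := fun P => {x | x.2 ∈ (J x.1).concI P}
  roleI := fun r => {p | ∃ (i : ι) (d e : (J i).Dom),
    p = (⟨i, d⟩, ⟨i, e⟩) ∧ (d, e) ∈ (J i).roleI r}

/-- `l` is a path in `I` starting at `d` (for `L = ALC`, only role names may
occur on the path; for `L = ALCI` also inverse roles). -/
def IsPathFrom (L : DL) (I : Interp) : I.Dom → List (DLRole × I.Dom) → Prop
  | _, [] => True
  | d, (r, e) :: l =>
      (d, e) ∈ I.rSem r ∧ (L = DL.alc → ∃ m, r = DLRole.name m) ∧ IsPathFrom L I e l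

/-- The tail (last element) of a path starting at `d`. -/
def PathTail (I : Interp) (d : I.Dom) (l : List (DLRole × I.Dom)) : I.Dom :=
  (l.getLast?).elim d Prod.snd

/-- Domain of `I_{A,h,L}`: individual names plus, for every individual name,
paths in `I` (elements not corresponding to `ind(A)` or to valid nonempty
paths are unlabeled and isolated junk). -/
abbrev IAhDom (I : Interp) : Type := ℕ ⊕ (ℕ × List (DLRole × I.Dom))

/-- The element of `I_{A,h,L}` given by the path `l` attached at individual
`a`; the root (empty path) is identified with `a` itself. -/
def IAhNode (I : Interp) (a : ℕ) : List (DLRole × I.Dom) → IAhDom I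
  | [] => Sum.inl a
  | l => Sum.inr (a, l)

/-- Validity of a path attached at `a` in `I_{A,h,L}`. -/
def IAhValid (L : DL) (I : Interp) (A : ABox) (h : ℕ → I.Dom)
    (a : ℕ) (l : List (DLRole × I.Dom)) : Prop :=
  a ∈ ABoxInds A ∧ IsPathFrom L I (h a) l

/-- The interpretation `I_{A,h,L}`: start from the interpretation with domain
`ind(A)`, concept memberships induced from `I` via `h`, and role edges exactly
the role assertions of `A`; then disjointly attach, for every `a ∈ ind(A)`,
the `L`-unraveling of `I` at `h(a)`, identifying its root with `a`. -/
def IAh (L : DL) (I : Interp) (A : ABox) (h : ℕ → I.Dom) : Interp where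
  Dom := IAhDom I
  indI := Sum.inl
  indI_inj := Sum.inl_injective
  concI := fun P => {x : IAhDom I |
    (∃ a, x = Sum.inl a ∧ a ∈ ABoxInds A ∧ h a ∈ I.concI P) ∨
    (∃ a l, x = Sum.inr (a, l) ∧ l ≠ [] ∧ IAhValid L I A h a l ∧
      PathTail I (h a) l ∈ I.concI P)}
  roleI := fun r => {p : IAhDom I × IAhDom I |
    (∃ a b, p.1 = Sum.inl a ∧ p.2 = Sum.inl b ∧ Assertion.role r a b ∈ A) ∨
    (∃ a l e, IAhValid L I A h a (l ++ [(DLRole.name r, e)]) ∧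
      p.1 = IAhNode I a l ∧ p.2 = IAhNode I a (l ++ [(DLRole.name r, e)])) ∨
    (∃ a l e, IAhValid L I A h a (l ++ [(DLRole.inv r, e)]) ∧
      p.1 = IAhNode I a (l ++ [(DLRole.inv r, e)]) ∧ p.2 = IAhNode I a l)}

/-- Restriction of an interpretation to the elements satisfying `P`
(elements outside `P` become unlabeled and isolated). -/
def Interp.restrictP (I : Interp) (P : I.Dom → Prop) : Interp where
  Dom := I.Dom
  indI := I.indI
  indI_inj := I.indI_inj
  concI := fun Q => {d | d ∈ I.concI Q ∧ P d}
  roleI := fun r => {p | p ∈ I.roleI r ∧ P p.1 ∧ P p.2}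

/-- Depth of elements of `I_{A,h,L}` (ABox individuals have depth 0). -/
def IAhDepthLE (I : Interp) (n : ℕ) : IAhDom I → Prop
  | Sum.inl _ => True
  | Sum.inr al => al.2.length ≤ n

/-! ## Sizes -/

/-- Size of a UCQ (number of atoms). -/
def UCQSize (q : UCQ) : ℕ := q.sum Finset.card

/-- Size of an ABox-UCQ example. -/
def UExSize (e : UEx) : ℕ := e.1.card + UCQSize e.2

/-- Size `||E||` of a collection of ABox-UCQ examples. -/
def ESize (Ep En : Finset UEx) : ℕ := Ep.sum UExSize + En.sum UExSize

/-- The (exponential) bound `bound(E)` on the degree: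
`||E⁻||` plus the sum over positive examples `(A,q)` of `(||(A,q)||+1)^{||q||}`. -/
def EBound (Ep En : Finset UEx) : ℕ :=
  En.sum UExSize + Ep.sum (fun e => (UExSize e + 1) ^ UCQSize e.2)

/-! ## Connectivity, components, variations -/

def ABoxAdj (A : ABox) (a b : ℕ) : Prop :=
  ∃ r, Assertion.role r a b ∈ A ∨ Assertion.role r b a ∈ A

/-- Connectivity of individuals in an ABox. -/
def ABoxConn (A : ABox) : ℕ → ℕ → Prop := Relation.ReflTransGen (ABoxAdj A)

/-- `B` is a maximally connected component of the ABox `A`. -/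
def IsComponent (B A : ABox) : Prop :=
  ∃ a ∈ ABoxInds A, ∀ α : Assertion,
    α ∈ B ↔ α ∈ A ∧ ∀ c ∈ AssertionInds α, ABoxConn A a c

def AtomTerms : Atom → Finset Term
  | .catom _ t => {t}
  | .ratom _ t t' => {t, t'}

/-- The terms (variables and individuals) occurring in a CQ. -/
def CQTerms (q : CQ) : Finset Term := q.biUnion AtomTerms

def CQAdj (q : CQ) (t t' : Term) : Prop :=
  ∃ r, Atom.ratom r t t' ∈ q ∨ Atom.ratom r t' t ∈ q

/-- A CQ is connected. -/
def CQConnected (q : CQ) : Prop :=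
  ∀ t ∈ CQTerms q, ∀ t' ∈ CQTerms q, Relation.ReflTransGen (CQAdj q) t t'

def SubstTerm (σ : ℕ → Term) : Term → Term
  | .var x => σ x
  | .ind a => Term.ind a

def SubstAtom (σ : ℕ → Term) : Atom → Atom
  | .catom P t => Atom.catom P (SubstTerm σ t)
  | .ratom r t t' => Atom.ratom r (SubstTerm σ t) (SubstTerm σ t')

/-- An `A`-variation of a CQ `p`: consistently replace zero or more variables by
individual names from `ind(A)` and possibly identify variables. -/
def IsVariation (A : ABox) (p p' : CQ) : Prop :=
  ∃ σ : ℕ → Term,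
    (∀ x : ℕ, (∃ y, σ x = Term.var y) ∨ ∃ a ∈ ABoxInds A, σ x = Term.ind a) ∧
    p' = p.image (SubstAtom σ)

def Assertion.toAtom : Assertion → Atom
  | .conc P a => Atom.catom P (Term.ind a)
  | .role r a b => Atom.ratom r (Term.ind a) (Term.ind b)

/-- The interpretation `I_q` induced by a CQ. -/
def CQInterp (p : CQ) : Interp where
  Dom := Term
  indI := Term.ind
  indI_inj := fun _ _ hab => Term.ind.inj hab
  concI := fun P => {t | Atom.catom P t ∈ p}
  roleI := fun r => {tt | Atom.ratom r tt.1 tt.2 ∈ p}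

/-- A proper `A`-variation. -/
def IsProperVariation (L : DL) (A : ABox) (p p' : CQ) : Prop :=
  IsVariation A p p' ∧
  (∀ r a b, Atom.ratom r (Term.ind a) (Term.ind b) ∈ p' → Assertion.role r a b ∈ A) ∧
  IsForestModel L (CQInterp p') (A.filter fun α => α.toAtom ∈ p')

/-- A weak homomorphism from a CQ into an interpretation (need not be the
identity on individual names). -/
def WeakHom (I : Interp) (g : Term → I.Dom) (p : CQ) : Prop :=
  (∀ P t, Atom.catom P t ∈ p → g t ∈ I.concI P) ∧
  (∀ r t t', Atom.ratom r t t' ∈ p → (g t, g t') ∈ I.roleI r)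

def ReachStep (L : DL) (I : Interp) (d e : I.Dom) : Prop :=
  match L with
  | DL.alc => ∃ r, (d, e) ∈ I.roleI r
  | DL.alci => ∃ r, (d, e) ∈ I.roleI r ∨ (e, d) ∈ I.roleI r

/-- `L`-reachability in an interpretation. -/
def Reach (L : DL) (I : Interp) : I.Dom → I.Dom → Prop :=
  Relation.ReflTransGen (ReachStep L I)

/-- Compatibility of a weak homomorphism `g` (from `p'` to `I`) with a
homomorphism `h` (from `A` to `I`). -/
def CompatibleWith (L : DL) (I : Interp) (A : ABox) (h : ℕ → I.Dom)
    (p' : CQ) (g : Term → I.Dom) : Prop :=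
  (∀ a ∈ CQInds p', g (Term.ind a) = h a) ∧
  (∀ x : ℕ, Term.var x ∈ CQTerms p' →
    ∃ a ∈ ABoxInds A, Reach L I (h a) (g (Term.var x)))

/-- Query classes. -/
inductive QClass : Type
  | aq
  | fullcq
  | cq
  | ucq

/-- A UCQ belongs to a query class. -/
def UCQInClass : QClass → UCQ → Prop
  | .aq, q => ∃ Q a, q = {({Atom.catom Q (Term.ind a)} : CQ)}
  | .fullcq, q => ∃ p : CQ, q = {p} ∧ CQIsFull p
  | .cq, q => ∃ p : CQ, q = {p}
  | .ucq, _ => True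


/-!
The ALCI-ontology `{A₁ ⊑ ∃r⁻.A₂, A₂ ⊑ ∃r⁻.A₁}` has models on `ℤ`, with `r` the successor
relation, `A₁` and `A₂` the two parity classes (shifted so that `a` lies in the prescribed
one) and `B` empty; so both negative examples are refuted while every `A₁`- or
`A₂`-element has an `r`-predecessor in the other class.

An ALC-ontology cannot force `a` to have a predecessor. Given a model of `O` and `A₁(a)`
(which the negative example `({A₁(a)}, B(a))` provides), let `a` denote a fresh copy of its
element with the same concept memberships and the same successors but no predecessors.
ALC-concepts only look along outgoing role edges, so this is again a model of `O` and
`A₁(a)`, and it refutes `∃x (r(x,a) ∧ A₂(x))`.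
-/

namespace Interp

/-- `I` with the individual `a` moved to a fresh copy (`none`) of the element it denotes in
`I`; the copy has the same concept memberships and successors but no predecessors, and
every other element `some d` behaves like `d`. -/
def detachInd (I : Interp) (a : ℕ) : Interp where
  Dom := Option I.Dom
  indI n := if n = a then none else some (I.indI n)
  indI_inj b c h := by
    dsimp only at h
    split_ifs at h with hb hc hc
    · exact hb.trans hc.symm
    · exact I.indI_inj (Option.some_injective _ h)
  concI P := {x | x.getD (I.indI a) ∈ I.concI P}
  roleI r := {p | ∃ e, p.2 = some e ∧ (p.1.getD (I.indI a), e) ∈ I.roleI r}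

variable (I : Interp) (a : ℕ)

theorem detachInd_indI_getD (b : ℕ) : ((I.detachInd a).indI b).getD (I.indI a) = I.indI b := by
  by_cases hb : b = a <;> simp [detachInd, hb]

theorem not_mem_roleI_detachInd (r : ℕ) (d : (I.detachInd a).Dom) :
    (d, (I.detachInd a).indI a) ∉ (I.detachInd a).roleI r := by
  rintro ⟨e, he, -⟩
  simp [detachInd] at he

theorem mem_cSem_detachInd {C : Concept} (hi : C.invFree) (hc : C.countFree)
    (x : (I.detachInd a).Dom) : x ∈ (I.detachInd a).cSem C ↔ x.getD (I.indI a) ∈ I.cSem C := by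
  induction C generalizing x with
  | top => simp [cSem]
  | atom A => rfl
  | neg C ih => exact not_congr (ih hi hc x)
  | inter C D ihC ihD => exact and_congr (ihC hi.1 hc.1 x) (ihD hi.2 hc.2 x)
  | ex r C ih =>
    obtain ⟨⟨m, rfl⟩, hi⟩ := hi
    constructor
    · rintro ⟨_, ⟨e, rfl, he⟩, heC⟩
      exact ⟨e, he, (ih hi hc (some e)).mp heC⟩
    · rintro ⟨e, he, heC⟩
      exact ⟨some e, ⟨e, rfl, he⟩, (ih hi hc (some e)).mpr heC⟩
  | atLeast => exact hc.elim
  | atMost => exact hc.elim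

theorem IsModelOf.detachInd {I : Interp} {O : Ontology} (hI : I.IsModelOf O)
    (hO : OntologyInLang DL.alc O) (a : ℕ) : (I.detachInd a).IsModelOf O := by
  intro ci hci x hx
  obtain ⟨hi₁, hc₁, hi₂, hc₂⟩ := hO ci hci
  exact (I.mem_cSem_detachInd a hi₂ hc₂ x).mpr
    (hI ci hci ((I.mem_cSem_detachInd a hi₁ hc₁ x).mp hx))

theorem SatABox.detachInd {I : Interp} {A : ABox} {a : ℕ} (hI : I.SatABox A)
    (hA : ∀ r b, Assertion.role r b a ∉ A) : (I.detachInd a).SatABox A := by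
  intro α hα
  cases α with
  | conc P b =>
    show ((I.detachInd a).indI b).getD (I.indI a) ∈ I.concI P
    rw [detachInd_indI_getD]
    exact hI _ hα
  | role r b c =>
    have hc : c ≠ a := by rintro rfl; exact hA r b hα
    refine ⟨I.indI c, by simp [Interp.detachInd, hc], ?_⟩
    show (((I.detachInd a).indI b).getD (I.indI a), I.indI c) ∈ I.roleI r
    rw [detachInd_indI_getD]
    exact hI _ hα

end Interp

theorem consistentWith_of_not_entailsCQ {A : ABox} {O : Ontology} {q : CQ}
    (h : ¬ EntailsCQ A O q) : ConsistentWith A O := by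
  by_contra hcons
  exact h fun I hI hA => (hcons ⟨I, hI, hA⟩).elim

theorem not_entailsCQ_of_alc_of_ratom_ind {A : ABox} {O : Ontology} {q : CQ} {a r : ℕ} {t : Term}
    (hO : OntologyInLang DL.alc O) (hcons : ConsistentWith A O)
    (hA : ∀ s b, Assertion.role s b a ∉ A) (hq : Atom.ratom r t (Term.ind a) ∈ q) :
    ¬ EntailsCQ A O q := by
  obtain ⟨I, hI, hIA⟩ := hcons
  intro hent
  obtain ⟨v, hv⟩ := hent (I.detachInd a) (hI.detachInd hO a) (hIA.detachInd hA)
  exact I.not_mem_roleI_detachInd a r _ (hv _ hq)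

theorem entailsCQ_of_ex_inv_mem {O : Ontology} {A B r a x : ℕ}
    (hO : (Concept.atom A, Concept.ex (DLRole.inv r) (Concept.atom B)) ∈ O) :
    EntailsCQ {Assertion.conc A a} O
      {Atom.ratom r (Term.var x) (Term.ind a), Atom.catom B (Term.var x)} := by
  intro I hI hA
  obtain ⟨e, he, heB⟩ := hI _ hO (hA _ (Finset.mem_singleton_self _))
  refine ⟨fun _ => e, ?_⟩
  simp only [Finset.mem_insert, Finset.mem_singleton, forall_eq_or_imp, forall_eq]
  exact ⟨he, heB⟩

def alternatingOntology (A₁ A₂ r : ℕ) : Ontology :=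
  {(Concept.atom A₁, Concept.ex (DLRole.inv r) (Concept.atom A₂)),
   (Concept.atom A₂, Concept.ex (DLRole.inv r) (Concept.atom A₁))}

section Alternating

variable (A₁ A₂ r : ℕ)

theorem alternatingOntology_comm : alternatingOntology A₁ A₂ r = alternatingOntology A₂ A₁ r :=
  Finset.pair_comm _ _

theorem alternatingOntology_inLang_alci : OntologyInLang DL.alci (alternatingOntology A₁ A₂ r) := by
  simp [OntologyInLang, alternatingOntology, Concept.countFree]

def parityLine (c : ℤ) : Interp where
  Dom := ℤ
  indI n := n
  indI_inj _ _ h := Int.natCast_inj.mp h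
  concI P := {z | (P = A₁ ∧ Even (z + c)) ∨ (P = A₂ ∧ ¬ Even (z + c))}
  roleI s := {p | s = r ∧ p.2 = p.1 + 1}

variable {A₁ A₂ r} in
theorem mem_concI_parityLine {c : ℤ} {P : ℕ} {z : ℤ} :
    z ∈ (parityLine A₁ A₂ r c).concI P ↔ (P = A₁ ∧ Even (z + c)) ∨ (P = A₂ ∧ ¬ Even (z + c)) :=
  Iff.rfl

theorem parityLine_isModelOf (c : ℤ) :
    (parityLine A₁ A₂ r c).IsModelOf (alternatingOntology A₁ A₂ r) := by
  have pred_parity (z : ℤ) : Even (z - 1 + c) ↔ ¬ Even (z + c) := by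
    rw [sub_add_eq_add_sub, Int.even_sub_one]
  have pred_edge (z : ℤ) : (z, z - 1) ∈ (parityLine A₁ A₂ r c).rSem (DLRole.inv r) :=
    ⟨rfl, by ring⟩
  intro ci hci (z : ℤ) hz
  simp only [alternatingOntology, Finset.mem_insert, Finset.mem_singleton] at hci
  rcases hci with rfl | rfl <;> have hz := mem_concI_parityLine.mp hz <;>
    refine ⟨z - 1, pred_edge z, mem_concI_parityLine (z := z - 1) |>.mpr ?_⟩ <;>
    rw [pred_parity] <;> grind

theorem not_entailsCQ_alternatingOntology {B : ℕ} (hB₁ : B ≠ A₁) (hB₂ : B ≠ A₂) (a : ℕ) :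
    ¬ EntailsCQ {Assertion.conc A₁ a} (alternatingOntology A₁ A₂ r) {Atom.catom B (Term.ind a)} := by
  intro hent
  have hsat : (parityLine A₁ A₂ r (-a)).SatABox {Assertion.conc A₁ a} := by
    intro α hα
    rw [Finset.mem_singleton.mp hα]
    exact mem_concI_parityLine (z := a).mpr (.inl ⟨rfl, by simp⟩)
  obtain ⟨v, hv⟩ := hent _ (parityLine_isModelOf A₁ A₂ r (-a)) hsat
  rcases mem_concI_parityLine.mp (hv _ (Finset.mem_singleton_self _)) with ⟨h, -⟩ | ⟨h, -⟩
  exacts [hB₁ h, hB₂ h]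

end Alternating

/-- `A₁, A₂, B` are the concept names `0, 1, 2`, `r` is the role name `0`, `a` is the
individual name `0`, and `x` is the variable `0`. -/
theorem cq_fitting_alc_alci_differ :
    let Ep : Finset CQEx :=
      {(({Assertion.conc 0 0} : ABox),
          ({Atom.ratom 0 (Term.var 0) (Term.ind 0),
            Atom.catom 1 (Term.var 0)} : CQ)),
       (({Assertion.conc 1 0} : ABox),
          ({Atom.ratom 0 (Term.var 0) (Term.ind 0),
            Atom.catom 0 (Term.var 0)} : CQ))}
    let En : Finset CQEx :=
      {(({Assertion.conc 0 0} : ABox), ({Atom.catom 2 (Term.ind 0)} : CQ)),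
       (({Assertion.conc 1 0} : ABox), ({Atom.catom 2 (Term.ind 0)} : CQ))}
    let O : Ontology :=
      {(Concept.atom 0, Concept.ex (DLRole.inv 0) (Concept.atom 1)),
       (Concept.atom 1, Concept.ex (DLRole.inv 0) (Concept.atom 0))}
    OntologyInLang DL.alci O ∧ FitsCQ O Ep En ∧
    (∃ O' : Ontology, OntologyInLang DL.alci O' ∧ FitsCQ O' Ep En) ∧
    (∀ O' : Ontology, OntologyInLang DL.alc O' → ¬ FitsCQ O' Ep En) := by
  intro Ep En O
  have hO : OntologyInLang DL.alci O := alternatingOntology_inLang_alci 0 1 0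
  have hfit : FitsCQ O Ep En := by
    refine ⟨?_, ?_⟩ <;>
      simp only [Ep, En, Finset.mem_insert, Finset.mem_singleton, forall_eq_or_imp, forall_eq]
    · exact ⟨entailsCQ_of_ex_inv_mem (Finset.mem_insert_self _ _),
        entailsCQ_of_ex_inv_mem (Finset.mem_insert_of_mem (Finset.mem_singleton_self _))⟩
    · refine ⟨not_entailsCQ_alternatingOntology 0 1 0 (by decide) (by decide) 0, ?_⟩
      rw [show O = alternatingOntology 1 0 0 from alternatingOntology_comm 0 1 0]
      exact not_entailsCQ_alternatingOntology 1 0 0 (by decide) (by decide) 0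
  refine ⟨hO, hfit, ⟨O, hO, hfit⟩, fun O' hO' ⟨hpos, hneg⟩ => ?_⟩
  have hcons := consistentWith_of_not_entailsCQ (hneg _ (Finset.mem_insert_self _ _))
  exact not_entailsCQ_of_alc_of_ratom_ind hO' hcons (by simp) (Finset.mem_insert_self _ _)
    (hpos _ (Finset.mem_insert_self _ _))

end DLFit
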